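/- The family F = {f_n : n ∈ ℕ} with f_n(z) = nz on the open unit disk 𝔻 is not normal in 𝔻, even though for the choice a_{1f_n}(z) = nz, a_{2f_n}(z) = nz², a_{3f_n}(z) = nz³ every pair f_n, f_m satisfies that f_n − a_{j f_n} and f_m − a_{j f_m} share the value 0 in 𝔻 for j = 1,2,3. -/

import Mathlib

open Filter Topology OnePoint Metric
open scoped Classical

noncomputable def chord : OnePoint ℂ → OnePoint ℂ → ℝ := fun x y =>
  Option.elim (α := ℂ) x
    (Option.elim (α := ℂ) y 0 (fun b => 2 / Real.sqrt (1 + ‖b‖ ^ 2)))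
    (fun a =>
      Option.elim (α := ℂ) y (2 / Real.sqrt (1 + ‖a‖ ^ 2))
        (fun b => 2 * ‖a - b‖ / Real.sqrt ((1 + ‖a‖ ^ 2) * (1 + ‖b‖ ^ 2))))

/-- spherical (arclength) metric on the Riemann sphere, diameter π -/
noncomputable def sph (x y : OnePoint ℂ) : ℝ := 2 * Real.arcsin (chord x y / 2)

/-- value of a meromorphic function as a point of the Riemann sphere -/
noncomputable def sphVal (f : ℂ → ℂ) (z : ℂ) : OnePoint ℂ :=
  if Tendsto (fun w => ‖f w‖) (𝓝[≠] z) atTop then ∞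
  else (((limUnder (𝓝[≠] z) f : ℂ) : OnePoint ℂ))

def IsMeroSphere (D : Set ℂ) (A : ℂ → OnePoint ℂ) : Prop :=
  ∃ a : ℂ → ℂ, MeromorphicOn a D ∧ ∀ z ∈ D, A z = sphVal a z

def IsMeroSphereOrInf (D : Set ℂ) (A : ℂ → OnePoint ℂ) : Prop :=
  IsMeroSphere D A ∨ ∀ z ∈ D, A z = ∞

/-- Normality: every sequence has a subsequence converging locally uniformly (spherically)
to a meromorphic function or to ∞. -/
def NormalOn (D : Set ℂ) (F : Set (ℂ → ℂ)) : Prop :=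
  ∀ f : ℕ → ℂ → ℂ, (∀ n, f n ∈ F) →
    ∃ φ : ℕ → ℕ, StrictMono φ ∧ ∃ G : ℂ → OnePoint ℂ,
      IsMeroSphereOrInf D G ∧
      ∀ K : Set ℂ, K ⊆ D → IsCompact K → ∀ ε : ℝ, 0 < ε →
        ∀ᶠ n in atTop, ∀ z ∈ K, sph (sphVal (f (φ n)) z) (G z) < ε

/-- rational map of degree at most m -/
def IsRatDegLE (m : ℕ) (R : ℂ → ℂ) : Prop :=
  ∃ p q : Polynomial ℂ, q ≠ 0 ∧ p.degree ≤ (m : ℕ) ∧ q.degree ≤ (m : ℕ) ∧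
    ∀ z : ℂ, R z = p.eval z / q.eval z


lemma sphVal_of_tendsto {g : ℂ → ℂ} {z c : ℂ} (h : Tendsto g (𝓝[≠] z) (𝓝 c)) :
    sphVal g z = (c : OnePoint ℂ) := by
  have hn : ¬ Tendsto (fun w => ‖g w‖) (𝓝[≠] z) atTop :=
    not_tendsto_atTop_of_tendsto_nhds h.norm
  rw [sphVal, if_neg hn, h.limUnder_eq]

lemma chord_coe_coe (a b : ℂ) :
    chord (a : OnePoint ℂ) (b : OnePoint ℂ)
      = 2 * ‖a - b‖ / Real.sqrt ((1 + ‖a‖ ^ 2) * (1 + ‖b‖ ^ 2)) := rfl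

lemma chord_coe_inf (a : ℂ) : chord (a : OnePoint ℂ) ∞ = 2 / Real.sqrt (1 + ‖a‖ ^ 2) := rfl

theorem example_nz_not_normal :
    (∀ n m : ℕ, ∀ j : Fin 3, ∀ z ∈ Metric.ball (0:ℂ) 1,
      (((n:ℂ)+1) * z - ((n:ℂ)+1) * z ^ ((j:ℕ)+1) = 0 ↔
       ((m:ℂ)+1) * z - ((m:ℂ)+1) * z ^ ((j:ℕ)+1) = 0)) ∧
    ¬ NormalOn (Metric.ball (0:ℂ) 1)
        {g | ∃ n : ℕ, g = fun z : ℂ => ((n:ℂ)+1) * z} := by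
  constructor
  · intro n m j z _
    have key : ∀ k : ℕ, (((k:ℂ)+1) * z - ((k:ℂ)+1) * z ^ ((j:ℕ)+1) = 0)
        ↔ (z - z ^ ((j:ℕ)+1) = 0) := by
      intro k
      rw [show ((k:ℂ)+1) * z - ((k:ℂ)+1) * z ^ ((j:ℕ)+1)
            = ((k:ℂ)+1) * (z - z ^ ((j:ℕ)+1)) from by ring, mul_eq_zero]
      simp [Nat.cast_add_one_ne_zero k]
    rw [key n, key m]
  · intro hN
    obtain ⟨φ, hφ, G, hG, hconv⟩ :=
      hN (fun n z => ((n:ℂ)+1) * z) (fun n => ⟨n, rfl⟩)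
    have hsphf : ∀ n z : ℂ, sphVal (fun w : ℂ => (n+1) * w) z = (((n+1) * z : ℂ) : OnePoint ℂ) := by
      intro n z
      exact sphVal_of_tendsto
        (((continuous_const.mul continuous_id).tendsto z).mono_left nhdsWithin_le_nhds)
    rcases hG with ⟨a, ha, haG⟩ | hG
    · -- meromorphic limit case
      have h14 : (1/4 : ℂ) ∈ Metric.ball (0:ℂ) 1 := by
        rw [mem_ball_zero_iff,
          show ((1/4 : ℂ)) = (((1/4 : ℝ)) : ℂ) from by norm_num,
          Complex.norm_real, Real.norm_eq_abs]
        rw [abs_of_nonneg (by norm_num)]; norm_num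
      have hev := (ha (1/4) h14).eventually_analyticAt
      rw [eventually_nhdsWithin_iff, Metric.eventually_nhds_iff] at hev
      obtain ⟨δ, hδ, hδa⟩ := hev
      set r : ℝ := 1/4 + min δ (1/4) / 4 with hrdef
      have hmin : 0 < min δ (1/4) := lt_min hδ (by norm_num)
      have hr : 0 < r := by simp only [hrdef]; linarith
      set w : ℂ := (r : ℂ) with hwdef
      have hnormw : ‖w‖ = r := by
        rw [hwdef, Complex.norm_real, Real.norm_eq_abs, abs_of_nonneg hr.le]
      have hwball : w ∈ Metric.ball (0:ℂ) 1 := by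
        rw [mem_ball_zero_iff, hnormw, hrdef]
        have : min δ (1/4) ≤ 1/4 := min_le_right _ _
        linarith
      have hA : AnalyticAt ℂ a w := by
        apply hδa
        · rw [Complex.dist_eq, show w - 1/4 = ((min δ (1/4) / 4 : ℝ) : ℂ) from by
            rw [hwdef, hrdef]; push_cast; ring]
          rw [Complex.norm_real, Real.norm_eq_abs, abs_of_nonneg (by linarith)]
          have := min_le_left δ (1/4 : ℝ)
          linarith
        · simp only [Set.mem_compl_iff, Set.mem_singleton_iff]
          intro hcontra
          rw [hwdef, hrdef] at hcontra
          have h' : ((1/4 + min δ (1/4) / 4 : ℝ) : ℂ) = ((1/4 : ℝ) : ℂ) := by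
            rw [hcontra]; norm_num
          have := Complex.ofReal_injective h'
          linarith
      have hGw : G w = ((a w : ℂ) : OnePoint ℂ) := by
        rw [haG w hwball]
        exact sphVal_of_tendsto (hA.continuousAt.tendsto.mono_left nhdsWithin_le_nhds)
      set b : ℂ := a w with hbdef
      have hsqb : (0:ℝ) < Real.sqrt (1 + ‖b‖ ^ 2) := Real.sqrt_pos.mpr (by positivity)
      set ε : ℝ := 2 * Real.arcsin (1 / (2 * Real.sqrt (1 + ‖b‖ ^ 2))) with hεdef
      have hε : 0 < ε := by
        have h1 : (0:ℝ) < 1 / (2 * Real.sqrt (1 + ‖b‖ ^ 2)) := by positivity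
        have := Real.arcsin_pos.mpr h1
        rw [hεdef]; linarith
      have hc := hconv {w} (Set.singleton_subset_iff.mpr hwball) isCompact_singleton ε hε
      rw [eventually_atTop] at hc
      obtain ⟨N, hNc⟩ := hc
      set M : ℕ := max N (⌈(1 + 2*‖b‖)/r⌉₊) with hMdef
      have h1 := hNc M (le_max_left _ _) w rfl
      rw [hsphf, hGw] at h1
      set c : ℂ := ((φ M : ℂ) + 1) * w with hcdef
      have hnormc : ‖c‖ = ((φ M : ℝ) + 1) * r := by
        rw [hcdef, norm_mul, hnormw]
        congr 1
        rw [show ((φ M : ℂ) + 1) = (((φ M + 1 : ℕ)) : ℂ) from by push_cast; ring,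
          Complex.norm_natCast]
        push_cast; ring
      have hclarge : 1 + 2*‖b‖ ≤ ‖c‖ := by
        have h2 : (1 + 2*‖b‖)/r ≤ (M : ℝ) := by
          refine le_trans (Nat.le_ceil _) ?_
          exact_mod_cast le_max_right N _
        have h3 : (M : ℝ) ≤ (φ M : ℝ) := by exact_mod_cast hφ.le_apply
        have h4 : (1 + 2*‖b‖) ≤ (M : ℝ) * r := by
          have := mul_le_mul_of_nonneg_right h2 hr.le
          rwa [div_mul_cancel₀ _ (ne_of_gt hr)] at this
        rw [hnormc]
        nlinarith
      have hsqc : (0:ℝ) < Real.sqrt (1 + ‖c‖ ^ 2) := Real.sqrt_pos.mpr (by positivity)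
      have hsqcle : Real.sqrt (1 + ‖c‖ ^ 2) ≤ 1 + ‖c‖ := by
        rw [show (1:ℝ) + ‖c‖ = Real.sqrt ((1 + ‖c‖)^2) from
          (Real.sqrt_sq (by positivity)).symm]
        exact Real.sqrt_le_sqrt (by nlinarith [norm_nonneg c])
      have hcb : 1 + ‖c‖ ≤ 2 * ‖c - b‖ := by
        have := norm_sub_norm_le c b
        linarith
      have hlow : ε ≤ sph ((c : OnePoint ℂ)) ((b : OnePoint ℂ)) := by
        rw [sph, chord_coe_coe, hεdef]
        have harg : 1 / (2 * Real.sqrt (1 + ‖b‖ ^ 2))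
            ≤ 2 * ‖c - b‖ / Real.sqrt ((1 + ‖c‖ ^ 2) * (1 + ‖b‖ ^ 2)) / 2 := by
          rw [Real.sqrt_mul (by positivity),
            show 2 * ‖c - b‖ / (Real.sqrt (1 + ‖c‖ ^ 2) * Real.sqrt (1 + ‖b‖ ^ 2)) / 2
              = ‖c - b‖ / (Real.sqrt (1 + ‖c‖ ^ 2) * Real.sqrt (1 + ‖b‖ ^ 2)) from by ring,
            div_le_div_iff₀ (by positivity) (by positivity)]
          have h5 : Real.sqrt (1 + ‖c‖ ^ 2) ≤ 2 * ‖c - b‖ := le_trans hsqcle hcb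
          nlinarith [hsqb, hsqc]
        have := Real.monotone_arcsin harg
        linarith
      rw [hcdef] at hlow
      linarith
    · -- G ≡ ∞ case
      have h0 : (0:ℂ) ∈ Metric.ball (0:ℂ) 1 := mem_ball_self one_pos
      have hc := hconv {0} (Set.singleton_subset_iff.mpr h0) isCompact_singleton 3 (by norm_num)
      obtain ⟨n, hn⟩ := hc.exists
      have h1 := hn 0 rfl
      rw [hsphf, hG 0 h0] at h1
      rw [show ((φ n : ℂ) + 1) * 0 = (0:ℂ) from mul_zero _] at h1
      have heq : sph ((0:ℂ) : OnePoint ℂ) ∞ = Real.pi := by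
        rw [sph, chord_coe_inf]
        norm_num [Real.sqrt_one, Real.arcsin_one]
        ring
      rw [heq] at h1
      have := Real.pi_gt_three
      linarith
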